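/- Let H be a Hilbert space, I = [a,b) a bounded interval, and 1 ≤ p < q < ∞. Then: (a) there is a constant C(p) such that every u ∈ U^p(I)H with lim_{t↑b} u(t) = 0 belongs to V^p(I)H with ‖u‖_{V^p(I)H} ≤ C(p) ‖u‖_{U^p(I)H}; (b) there is a constant C(p,q) such that every right-continuous u : I → H with finite V^p(I)H norm and with u(a) = 0 belongs to U^q(I)H with ‖u‖_{U^q(I)H} ≤ C(p,q) ‖u‖_{V^p(I)H}. -/

import Mathlib

/-!
(a) On a partition `t`, the increments `u (t (k + 1)) - u (t k)` form a vector of `ℓ^p`. For an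
atom this vector has norm at most `2`, because each value of the atom occurs in at most two nonzero
increments. The triangle inequality in `ℓ^p`, applied to an atomic decomposition
`u = ∑ cₙ Aₙ`, gives `‖u‖_{V^p} ≤ 2 ∑ |cₙ|`.

(b) Let `M = ‖u‖_{V^p}` and `ε = M 2⁻ⁿ`. Stop greedily at the first time `u` leaves the closed
`ε`-ball around its value at the previous stop. By right-continuity `u` jumps by at least `ε`
between consecutive stops, so there are at most `2^{np}` of them, and `u` varies by at most `ε` on
each cell. Putting together the grids of the scales `m ≤ n` gives nested grids `Gₙ` with
`O(2^{np})` points. The approximation `u ∘ (largest grid point ≤ x)` is then `2ε`-close to `u`.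
Consecutive approximations differ by a step function on `Gₙ` with values `O(M 2⁻ⁿ)`, which is
`O(M 2^{n(p/q - 1)})` times a `U^q` atom. Since `p < q` these coefficients are geometric.
-/

open scoped ENNReal
open MeasureTheory

attribute [local instance] Classical.propDecidable

namespace UVSpaces

variable {H : Type*} [NormedAddCommGroup H] [InnerProductSpace ℂ H]

/-- `V^p([a,b)) H` norm (with the convention `u(b) := 0`). -/
noncomputable def Vnorm (p a b : ℝ) (u : ℝ → H) : ℝ≥0∞ :=
  ⨆ (K : ℕ) (t : Fin (K+1) → ℝ) (_ : Monotone t) (_ : t 0 = a) (_ : t (Fin.last K) = b),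
    ENNReal.ofReal ((∑ k : Fin K,
      ‖(if t k.succ = b then 0 else u (t k.succ)) -
          (if t k.castSucc = b then 0 else u (t k.castSucc))‖ ^ p) ^ (1/p))

/-- `U^p([a,b)) H` atom. -/
def IsAtom (p a b : ℝ) (A : ℝ → H) : Prop :=
  ∃ (K : ℕ) (t : Fin (K+1) → ℝ) (ψ : Fin K → H),
    Monotone t ∧ t 0 = a ∧ t (Fin.last K) = b ∧
    (∑ k : Fin K, ‖ψ k‖ ^ p) ≤ 1 ∧
    ∀ x, A x = ∑ k : Fin K, if t k.castSucc ≤ x ∧ x < t k.succ then ψ k else 0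

/-- `U^p([a,b)) H` (atomic) norm. -/
noncomputable def Unorm (p a b : ℝ) (u : ℝ → H) : ℝ≥0∞ :=
  ⨅ (c : ℕ → ℂ) (A : ℕ → ℝ → H)
    (_ : Summable fun n => ‖c n‖) (_ : ∀ n, IsAtom p a b (A n))
    (_ : ∀ t ∈ Set.Ico a b, HasSum (fun n => c n • A n t) (u t)),
    ENNReal.ofReal (∑' n, ‖c n‖)

structure IsPartition (a b : ℝ) {K : ℕ} (t : Fin (K + 1) → ℝ) : Prop where
  monotone : Monotone t
  first : t 0 = a
  last : t (Fin.last K) = b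

namespace IsPartition

variable {a b : ℝ} {K : ℕ} {t : Fin (K + 1) → ℝ}

lemma mem_Icc (ht : IsPartition a b t) (i : Fin (K + 1)) : t i ∈ Set.Icc a b :=
  ⟨ht.first ▸ ht.monotone (Fin.zero_le i), ht.last ▸ ht.monotone (Fin.le_last i)⟩

lemma exists_cell (ht : IsPartition a b t) {x : ℝ} (hx : x ∈ Set.Ico a b) :
    ∃ j : Fin K, t j.castSucc ≤ x ∧ x < t j.succ := by
  set S := Finset.univ.filter fun i => t i ≤ x
  have hS : S.Nonempty := ⟨0, by simp [S, ht.first, hx.1]⟩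
  have hmax : t (S.max' hS) ≤ x := (Finset.mem_filter.mp (S.max'_mem hS)).2
  obtain ⟨j, hj⟩ : ∃ j : Fin K, j.castSucc = S.max' hS := by
    refine Fin.exists_castSucc_eq.mpr fun h => ?_
    exact (hx.2.trans_le (ht.last ▸ h ▸ hmax)).false
  refine ⟨j, hj ▸ hmax, lt_of_not_ge fun h => ?_⟩
  exact (Fin.castSucc_lt_succ (i := j)).not_ge (hj ▸ S.le_max' _ (by simp [S, h]))

end IsPartition

section StepFunctions

variable {E : Type*} {K : ℕ} {t : Fin (K + 1) → ℝ} {x : ℝ}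

noncomputable def stepFun [AddCommMonoid E] (t : Fin (K + 1) → ℝ) (ψ : Fin K → E) (x : ℝ) : E :=
  ∑ k : Fin K, if t k.castSucc ≤ x ∧ x < t k.succ then ψ k else 0

/-- The number of cells lying entirely to the left of `x`: the index of the cell containing `x`,
and `K` to the right of the partition. -/
noncomputable def cellIndex (t : Fin (K + 1) → ℝ) (x : ℝ) : Fin (K + 1) :=
  ⟨(Finset.univ.filter fun j : Fin K => t j.succ ≤ x).card,
    Nat.lt_succ_of_le ((Finset.card_filter_le _ _).trans (by simp))⟩

lemma val_cellIndex :
    (cellIndex t x : ℕ) = (Finset.univ.filter fun j : Fin K => t j.succ ≤ x).card :=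
  rfl

lemma cellIndex_mono : Monotone (cellIndex t) := fun _ _ hxy =>
  Fin.mk_le_mk.mpr <| Finset.card_le_card <| Finset.monotone_filter_right _ fun _ _ h => h.trans hxy

variable [AddCommMonoid E] {ψ : Fin K → E}

lemma stepFun_apply_of_mem_cell (ht : Monotone t) {j : Fin K} (h₁ : t j.castSucc ≤ x)
    (h₂ : x < t j.succ) : stepFun t ψ x = ψ j := by
  refine (Finset.sum_eq_single_of_mem j (Finset.mem_univ j) fun i _ hij => if_neg ?_).trans
    (if_pos ⟨h₁, h₂⟩)
  rintro ⟨hi₁, hi₂⟩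
  rcases hij.lt_or_gt with h | h
  · exact (hi₂.trans_le ((ht (Fin.succ_le_castSucc_iff.mpr h)).trans h₁)).false
  · exact (h₂.trans_le ((ht (Fin.succ_le_castSucc_iff.mpr h)).trans hi₁)).false

lemma stepFun_apply_of_le (ht : Monotone t) (hx : t (Fin.last K) ≤ x) : stepFun t ψ x = 0 :=
  Finset.sum_eq_zero fun _ _ =>
    if_neg fun h => (h.2.trans_le ((ht (Fin.le_last _)).trans hx)).false

lemma smul_stepFun {R : Type*} [DistribSMul R E] (c : R) :
    c • stepFun t ψ x = stepFun t (c • ψ) x := by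
  simp only [stepFun, Finset.smul_sum, smul_ite, smul_zero, Pi.smul_apply]

lemma stepFun_eq_snoc_cellIndex (ht : Monotone t) (hx : t 0 ≤ x) :
    stepFun t ψ x = Fin.snoc (α := fun _ => E) ψ 0 (cellIndex t x) := by
  by_cases hxb : x < t (Fin.last K)
  · obtain ⟨j, h₁, h₂⟩ := IsPartition.exists_cell ⟨ht, rfl, rfl⟩ ⟨hx, hxb⟩
    have : cellIndex t x = j.castSucc := by
      rw [Fin.ext_iff, val_cellIndex, Fin.val_castSucc, ← Fin.card_Iio j]
      congr 1
      ext i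
      simp only [Finset.mem_filter, Finset.mem_univ, true_and, Finset.mem_Iio]
      refine ⟨fun hi => lt_of_not_ge fun hji => ?_, fun hij => ?_⟩
      · exact (h₂.trans_le ((ht (Fin.succ_le_succ_iff.mpr hji)).trans hi)).false
      · exact (ht (Fin.succ_le_castSucc_iff.mpr hij)).trans h₁
    rw [stepFun_apply_of_mem_cell ht h₁ h₂, this, Fin.snoc_castSucc]
  · have : cellIndex t x = Fin.last K := by
      rw [Fin.ext_iff, val_cellIndex,
        Finset.filter_true_of_mem fun i _ => (ht (Fin.le_last _)).trans (not_lt.mp hxb)]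
      simp
    rw [stepFun_apply_of_le ht (not_lt.mp hxb), this, Fin.snoc_last]

end StepFunctions

section Variation

variable {E : Type*} [NormedAddCommGroup E] {p a b : ℝ} {K : ℕ} {t : Fin (K + 1) → ℝ}

lemma norm_sub_rpow_le (hp : 1 ≤ p) (x y : E) :
    ‖x - y‖ ^ p ≤ 2 ^ (p - 1) * (‖x‖ ^ p + ‖y‖ ^ p) :=
  calc ‖x - y‖ ^ p ≤ (‖x‖ + ‖y‖) ^ p :=
        Real.rpow_le_rpow (norm_nonneg _) (norm_sub_le x y) (by linarith)
    _ ≤ 2 ^ (p - 1) * (‖x‖ ^ p + ‖y‖ ^ p) := by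
        exact_mod_cast NNReal.rpow_add_le_mul_rpow_add_rpow ‖x‖₊ ‖y‖₊ hp

/-- Only the jumps of `n` contribute, and both their endpoints run injectively through `ι`. -/
lemma sum_norm_comp_sub_rpow_le {ι : Type*} [LinearOrder ι] [Fintype ι] (hp : 1 ≤ p) (f : ι → E)
    {n : Fin (K + 1) → ι} (hn : Monotone n) :
    ∑ k : Fin K, ‖f (n k.succ) - f (n k.castSucc)‖ ^ p ≤ 2 ^ p * ∑ i, ‖f i‖ ^ p := by
  set D := Finset.univ.filter fun k : Fin K => n k.castSucc < n k.succ
  have hjumps : ∑ k ∈ D, ‖f (n k.succ) - f (n k.castSucc)‖ ^ p =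
      ∑ k : Fin K, ‖f (n k.succ) - f (n k.castSucc)‖ ^ p := by
    refine Finset.sum_filter_of_ne fun k _ hk => (hn k.castSucc_le_succ).lt_of_ne fun h => hk ?_
    rw [h, sub_self, norm_zero, Real.zero_rpow (by linarith)]
  have hinj {g : Fin K → Fin (K + 1)} (hg : StrictMonoOn (n ∘ g) D) :
      ∑ k ∈ D, ‖f (n (g k))‖ ^ p ≤ ∑ i, ‖f i‖ ^ p := by
    refine (Finset.sum_image (f := fun i => ‖f i‖ ^ p) hg.injOn).symm.le.trans ?_
    exact Finset.sum_le_univ_sum_of_nonneg fun _ => by positivity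
  have hsucc : StrictMonoOn (n ∘ Fin.succ) D := fun k _ k' hk' hkk' =>
    (hn (Fin.succ_le_castSucc_iff.mpr hkk')).trans_lt (Finset.mem_filter.mp hk').2
  have hcastSucc : StrictMonoOn (n ∘ Fin.castSucc) D := fun k hk k' _ hkk' =>
    (Finset.mem_filter.mp hk).2.trans_le (hn (Fin.succ_le_castSucc_iff.mpr hkk'))
  calc ∑ k : Fin K, ‖f (n k.succ) - f (n k.castSucc)‖ ^ p
      ≤ ∑ k ∈ D, 2 ^ (p - 1) * (‖f (n k.succ)‖ ^ p + ‖f (n k.castSucc)‖ ^ p) :=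
        hjumps ▸ Finset.sum_le_sum fun k _ => norm_sub_rpow_le hp _ _
    _ = 2 ^ (p - 1) * (∑ k ∈ D, ‖f (n k.succ)‖ ^ p + ∑ k ∈ D, ‖f (n k.castSucc)‖ ^ p) := by
        rw [← Finset.sum_add_distrib, Finset.mul_sum]
    _ ≤ 2 ^ (p - 1) * (∑ i, ‖f i‖ ^ p + ∑ i, ‖f i‖ ^ p) := by
        gcongr
        exacts [hinj hsucc, hinj hcastSucc]
    _ = 2 ^ p * ∑ i, ‖f i‖ ^ p := by
        rw [← two_mul, ← mul_assoc, ← Real.rpow_add_one two_ne_zero, sub_add_cancel]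

noncomputable def pVariationSum (p : ℝ) (u : ℝ → E) (t : Fin (K + 1) → ℝ) : ℝ :=
  ∑ k : Fin K, ‖u (t k.succ) - u (t k.castSucc)‖ ^ p

lemma pVariationSum_nonneg {u : ℝ → E} : 0 ≤ pVariationSum p u t :=
  Finset.sum_nonneg fun _ _ => by positivity

lemma norm_toLp_increments (hp : 0 < p) (u : ℝ → E) (t : Fin (K + 1) → ℝ) :
    ‖WithLp.toLp (ENNReal.ofReal p) fun k : Fin K => u (t k.succ) - u (t k.castSucc)‖ =
      pVariationSum p u t ^ (1 / p) := by
  rw [PiLp.norm_eq_sum (by rwa [ENNReal.toReal_ofReal hp.le]), ENNReal.toReal_ofReal hp.le]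
  rfl

lemma isAtom_iff {a b : ℝ} {A : ℝ → E} :
    IsAtom p a b A ↔ ∃ (K : ℕ) (t : Fin (K + 1) → ℝ) (ψ : Fin K → E),
      IsPartition a b t ∧ ∑ k, ‖ψ k‖ ^ p ≤ 1 ∧ A = stepFun t ψ := by
  refine exists₃_congr fun K t ψ => ⟨?_, ?_⟩
  · rintro ⟨ht, h0, hl, hψ, hA⟩
    exact ⟨⟨ht, h0, hl⟩, hψ, funext hA⟩
  · rintro ⟨⟨ht, h0, hl⟩, hψ, rfl⟩
    exact ⟨ht, h0, hl, hψ, fun _ => rfl⟩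

lemma IsAtom.apply_of_le {A : ℝ → E} (hA : IsAtom p a b A) {x : ℝ} (hx : b ≤ x) : A x = 0 := by
  obtain ⟨J, s, ψ, hs, -, rfl⟩ := isAtom_iff.mp hA
  exact stepFun_apply_of_le hs.monotone (hs.last ▸ hx)

lemma IsAtom.pVariationSum_le (hp : 1 ≤ p) {A : ℝ → E} (hA : IsAtom p a b A)
    (ht : IsPartition a b t) : pVariationSum p A t ≤ 2 ^ p := by
  obtain ⟨J, s, ψ, hs, hψ, rfl⟩ := isAtom_iff.mp hA
  have hval (i : Fin (K + 1)) :
      stepFun s ψ (t i) = Fin.snoc (α := fun _ => E) ψ 0 (cellIndex s (t i)) :=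
    stepFun_eq_snoc_cellIndex hs.monotone (hs.first ▸ (ht.mem_Icc i).1)
  calc pVariationSum p (stepFun s ψ) t
      ≤ 2 ^ p * ∑ j, ‖Fin.snoc (α := fun _ => E) ψ 0 j‖ ^ p := by
        simp only [pVariationSum, hval]
        exact sum_norm_comp_sub_rpow_le hp _ (cellIndex_mono.comp ht.monotone)
    _ ≤ 2 ^ p := by
        rw [Fin.sum_univ_castSucc]
        simp only [Fin.snoc_castSucc, Fin.snoc_last, norm_zero,
          Real.zero_rpow (by linarith : p ≠ 0), add_zero]
        exact mul_le_of_le_one_right (by positivity) hψ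

lemma ofReal_le_Vnorm {u : ℝ → E} (ht : IsPartition a b t) :
    ENNReal.ofReal (pVariationSum p (Function.update u b 0) t ^ (1 / p)) ≤ Vnorm p a b u := by
  simp only [pVariationSum, Function.update_apply]
  exact le_iSup_of_le K <| le_iSup_of_le t <| le_iSup_of_le ht.monotone <|
    le_iSup_of_le ht.first <| le_iSup_of_le ht.last le_rfl

lemma Vnorm_le_ofReal {u : ℝ → E} {M : ℝ}
    (h : ∀ (K : ℕ) (t : Fin (K + 1) → ℝ), IsPartition a b t →
      pVariationSum p (Function.update u b 0) t ^ (1 / p) ≤ M) :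
    Vnorm p a b u ≤ ENNReal.ofReal M :=
  iSup₂_le fun K t => iSup_le fun hm => iSup_le fun h0 => iSup_le fun hl =>
    ENNReal.ofReal_le_ofReal <| by
      simpa only [pVariationSum, Function.update_apply] using h K t ⟨hm, h0, hl⟩

end Variation

section UpInVp

variable {p a b : ℝ} {u : ℝ → H}

lemma hasSum_update_of_isAtom {c : ℕ → ℂ} {A : ℕ → ℝ → H} (hA : ∀ n, IsAtom p a b (A n))
    (hu : ∀ x ∈ Set.Ico a b, HasSum (fun n => c n • A n x) (u x)) {x : ℝ}
    (hx : x ∈ Set.Icc a b) : HasSum (fun n => c n • A n x) (Function.update u b 0 x) := by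
  rcases hx.2.eq_or_lt with rfl | hxb
  · simpa only [Function.update_self, (hA _).apply_of_le le_rfl, smul_zero] using hasSum_zero
  · rw [Function.update_of_ne hxb.ne]
    exact hu x ⟨hx.1, hxb⟩

/-- The `V^p` norm of an atom is at most `2`, and the `V^p` norm is a seminorm: it is an `ℓ^p`
norm of the vector of increments. -/
lemma Vnorm_le_of_hasSum (hp : 1 ≤ p) {c : ℕ → ℂ} {A : ℕ → ℝ → H}
    (hc : Summable fun n => ‖c n‖) (hA : ∀ n, IsAtom p a b (A n))
    (hu : ∀ x ∈ Set.Ico a b, HasSum (fun n => c n • A n x) (u x)) :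
    Vnorm p a b u ≤ ENNReal.ofReal (2 * ∑' n, ‖c n‖) := by
  refine Vnorm_le_ofReal fun K t ht => ?_
  have hp₀ : 0 < p := by linarith
  have : Fact (1 ≤ ENNReal.ofReal p) := ⟨ENNReal.one_le_ofReal.mpr hp⟩
  let increments (v : ℝ → H) : PiLp (ENNReal.ofReal p) fun _ : Fin K => H :=
    WithLp.toLp _ fun k => v (t k.succ) - v (t k.castSucc)
  have hsum : HasSum (fun n => c n • increments (A n)) (increments (Function.update u b 0)) := by
    have : HasSum (fun n (k : Fin K) => c n • (A n (t k.succ) - A n (t k.castSucc)))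
        fun k : Fin K => Function.update u b 0 (t k.succ) - Function.update u b 0 (t k.castSucc) :=
      Pi.hasSum.mpr fun k => by
        simpa only [smul_sub] using (hasSum_update_of_isAtom hA hu (ht.mem_Icc k.succ)).sub
          (hasSum_update_of_isAtom hA hu (ht.mem_Icc k.castSucc))
    exact (PiLp.continuousLinearEquiv _ ℂ _).symm.toContinuousLinearMap.hasSum this
  have hatom (n : ℕ) : ‖increments (A n)‖ ≤ 2 := by
    rw [norm_toLp_increments hp₀]
    calc pVariationSum p (A n) t ^ (1 / p) ≤ ((2 : ℝ) ^ p) ^ (1 / p) := by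
          gcongr
          exacts [pVariationSum_nonneg, (hA n).pVariationSum_le hp ht]
      _ = 2 := by rw [← Real.rpow_mul zero_le_two, mul_one_div_cancel hp₀.ne', Real.rpow_one]
  rw [← norm_toLp_increments hp₀]
  refine hsum.norm_le_of_bounded (hc.hasSum.mul_left 2) fun n => ?_
  rw [norm_smul, mul_comm]
  exact mul_le_mul_of_nonneg_right (hatom n) (norm_nonneg _)

lemma Vnorm_le_two_mul_Unorm (hp : 1 ≤ p) (u : ℝ → H) :
    Vnorm p a b u ≤ ENNReal.ofReal 2 * Unorm p a b u := by
  simp only [Unorm,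
    ENNReal.mul_iInf_of_ne (by norm_num : ENNReal.ofReal 2 ≠ 0) ENNReal.ofReal_ne_top]
  refine le_iInf fun c => le_iInf fun A => le_iInf fun hc => le_iInf fun hA => le_iInf fun hu => ?_
  rw [← ENNReal.ofReal_mul zero_le_two]
  exact Vnorm_le_of_hasSum hp hc hA hu

end UpInVp

section VariationBounds

variable {E : Type*} [NormedAddCommGroup E] {p a b M : ℝ} {u : ℝ → E}

lemma pVariationSum_le_of_Vnorm_le (hp : 0 < p) (hM : 0 ≤ M)
    (hV : Vnorm p a b u ≤ ENNReal.ofReal M) {K : ℕ} {t : Fin (K + 1) → ℝ}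
    (ht : IsPartition a b t) : pVariationSum p (Function.update u b 0) t ≤ M ^ p := by
  have h := (ENNReal.ofReal_le_ofReal_iff hM).mp ((ofReal_le_Vnorm ht).trans hV)
  rwa [one_div, Real.rpow_inv_le_iff_of_pos pVariationSum_nonneg hM hp] at h

/-- Close the sequence with the endpoint `b`, where the convention `u(b) = 0` only adds a term. -/
lemma sum_range_norm_sub_rpow_le_of_Vnorm_le (hp : 0 < p) (hM : 0 ≤ M)
    (hV : Vnorm p a b u ≤ ENNReal.ofReal M) {τ : ℕ → ℝ} (hτ : Monotone τ) (hτ₀ : τ 0 = a)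
    {N : ℕ} (hN : τ N < b) : ∑ k ∈ Finset.range N, ‖u (τ (k + 1)) - u (τ k)‖ ^ p ≤ M ^ p := by
  set t : Fin (N + 2) → ℝ := fun i => if (i : ℕ) ≤ N then τ i else b
  have hτb {i : ℕ} (hi : i ≤ N) : τ i < b := (hτ hi).trans_lt hN
  have ht : IsPartition a b t := by
    refine ⟨fun i j hij => ?_, by simp [t, hτ₀], by simp [t]⟩
    simp only [t]
    split_ifs with hi hj hj
    · exact hτ hij
    · exact (hτb hi).le
    · exact absurd ((Fin.le_iff_val_le_val.mp hij).trans hj) hi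
    · exact le_rfl
  have hval {i : ℕ} (hi : i ≤ N) (j : Fin (N + 2)) (hj : (j : ℕ) = i) :
      Function.update u b 0 (t j) = u (τ i) := by
    simp only [t, hj, if_pos hi, Function.update_of_ne (hτb hi).ne]
  calc ∑ k ∈ Finset.range N, ‖u (τ (k + 1)) - u (τ k)‖ ^ p
      = ∑ k : Fin N, ‖Function.update u b 0 (t k.castSucc.succ) -
          Function.update u b 0 (t k.castSucc.castSucc)‖ ^ p := by
        rw [Finset.sum_range]
        refine Finset.sum_congr rfl fun k _ => ?_
        rw [hval k.2 _ rfl, hval k.2.le _ rfl]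
    _ ≤ pVariationSum p (Function.update u b 0) t := by
        rw [pVariationSum, Fin.sum_univ_castSucc]
        exact le_add_of_nonneg_right (by positivity)
    _ ≤ M ^ p := pVariationSum_le_of_Vnorm_le hp hM hV ht

lemma norm_le_of_Vnorm_le (hp : 0 < p) (hM : 0 ≤ M) (hV : Vnorm p a b u ≤ ENNReal.ofReal M)
    (hua : u a = 0) {x : ℝ} (hx : x ∈ Set.Ico a b) : ‖u x‖ ≤ M := by
  have hτ : Monotone fun k : ℕ => if k = 0 then a else x := fun i j hij => by
    dsimp only
    split_ifs <;> first | exact le_rfl | exact hx.1 | omega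
  have h := sum_range_norm_sub_rpow_le_of_Vnorm_le hp hM hV hτ rfl (N := 1) hx.2
  simp only [Finset.sum_range_one, if_true, hua, sub_zero] at h
  exact (Real.rpow_le_rpow_iff (norm_nonneg _) hM hp).mp h

end VariationBounds

section Stopping

variable {E : Type*} [NormedAddCommGroup E] {u : ℝ → E} {p a b M ε y : ℝ}

noncomputable def nextStop (u : ℝ → E) (ε b y : ℝ) : ℝ :=
  sInf ({x | y < x ∧ x < b ∧ ε < ‖u x - u y‖} ∪ {b})

lemma bddBelow_nextStop_set (hy : y ≤ b) :
    BddBelow ({x | y < x ∧ x < b ∧ ε < ‖u x - u y‖} ∪ {b}) :=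
  ⟨y, by rintro _ (⟨h, -⟩ | rfl); exacts [h.le, hy]⟩

lemma nextStop_le (hy : y ≤ b) : nextStop u ε b y ≤ b :=
  csInf_le (bddBelow_nextStop_set hy) (Or.inr rfl)

lemma le_nextStop (hy : y ≤ b) : y ≤ nextStop u ε b y :=
  le_csInf ⟨b, Or.inr rfl⟩ <| by rintro _ (⟨h, -⟩ | rfl); exacts [h.le, hy]

lemma norm_sub_le_of_lt_nextStop (hε : 0 ≤ ε) (hy : y ≤ b) {x : ℝ} (hyx : y ≤ x)
    (hx : x < nextStop u ε b y) : ‖u x - u y‖ ≤ ε := by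
  rcases hyx.eq_or_lt with rfl | hyx
  · simpa using hε
  refine not_lt.mp fun h => hx.not_ge (csInf_le (bddBelow_nextStop_set hy) (Or.inl ⟨hyx, ?_, h⟩))
  exact hx.trans_le (nextStop_le hy)

/-- `nextStop` is approached from the right by points where `u` is `ε`-far from `u y`. -/
lemma le_norm_nextStop_sub (hy : y ≤ b) (hlt : nextStop u ε b y < b)
    (hrc : Filter.Tendsto u (nhdsWithin (nextStop u ε b y) (Set.Ici (nextStop u ε b y)))
      (nhds (u (nextStop u ε b y)))) :
    ε ≤ ‖u (nextStop u ε b y) - u y‖ := by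
  set S := {x | y < x ∧ x < b ∧ ε < ‖u x - u y‖}
  have hclosure : nextStop u ε b y ∈ closure S := by
    have h := csInf_mem_closure ⟨b, Or.inr rfl⟩ (bddBelow_nextStop_set (ε := ε) (u := u) hy)
    rw [closure_union, closure_singleton] at h
    exact h.resolve_right hlt.ne
  have hS : S ⊆ Set.Ici (nextStop u ε b y) := fun x hx =>
    csInf_le (bddBelow_nextStop_set hy) (Or.inl hx)
  have : (nhdsWithin (nextStop u ε b y) S).NeBot := mem_closure_iff_nhdsWithin_neBot.mp hclosure
  refine ge_of_tendsto ((hrc.mono_left (nhdsWithin_mono _ hS)).sub_const (u y)).norm ?_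
  filter_upwards [self_mem_nhdsWithin] with x hx using hx.2.2.le

/-- Greedy stopping times: each stop is `ε`-far from the previous one, so by the `V^p` bound
there are at most `(M / ε) ^ p` of them before reaching `b`. -/
lemma exists_finset_oscillation_le (hp : 0 < p) (hM : 0 ≤ M) (hab : a ≤ b)
    (hV : Vnorm p a b u ≤ ENNReal.ofReal M)
    (hrc : ∀ x ∈ Set.Ico a b, Filter.Tendsto u (nhdsWithin x (Set.Ici x)) (nhds (u x)))
    (hε : 0 < ε) :
    ∃ T : Finset ℝ, a ∈ T ∧ b ∈ T ∧ ↑T ⊆ Set.Icc a b ∧ (T.card : ℝ) ≤ (M / ε) ^ p + 2 ∧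
      ∀ x ∈ Set.Ico a b, ∃ s ∈ T, s ≤ x ∧ ∀ y ∈ Set.Icc s x, ‖u y - u s‖ ≤ ε := by
  set τ : ℕ → ℝ := fun k => (nextStop u ε b)^[k] a
  have hτ_succ (k : ℕ) : τ (k + 1) = nextStop u ε b (τ k) := Function.iterate_succ_apply' _ _ _
  have hτ_mem (k : ℕ) : τ k ∈ Set.Icc a b := by
    induction k with
    | zero => exact ⟨le_rfl, hab⟩
    | succ k ih => exact hτ_succ k ▸ ⟨ih.1.trans (le_nextStop ih.2), nextStop_le ih.2⟩
  have hτ_mono : Monotone τ :=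
    monotone_nat_of_le_succ fun k => hτ_succ k ▸ le_nextStop (hτ_mem k).2
  set N := ⌊(M / ε) ^ p⌋₊ + 1
  have hτN : τ N = b := by
    by_contra h
    have hlt : τ N < b := (hτ_mem N).2.lt_of_ne h
    have hjump (k : ℕ) (hk : k ∈ Finset.range N) : ε ^ p ≤ ‖u (τ (k + 1)) - u (τ k)‖ ^ p := by
      have hk₁ : τ (k + 1) < b := (hτ_mono (Finset.mem_range.mp hk)).trans_lt hlt
      rw [hτ_succ] at hk₁ ⊢
      exact Real.rpow_le_rpow hε.le (le_norm_nextStop_sub (hτ_mem k).2 hk₁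
        (hrc _ ⟨(hτ_mem (k + 1)).1.trans_eq (hτ_succ k), hk₁⟩)) hp.le
    have hcount := (Finset.card_nsmul_le_sum _ _ _ hjump).trans
      (sum_range_norm_sub_rpow_le_of_Vnorm_le hp hM hV hτ_mono rfl hlt)
    rw [Finset.card_range, nsmul_eq_mul] at hcount
    have hN : (M / ε) ^ p < N := by exact_mod_cast Nat.lt_floor_add_one ((M / ε) ^ p)
    rw [Real.div_rpow hM hε.le, div_lt_iff₀ (by positivity)] at hN
    exact hN.not_ge hcount
  refine ⟨(Finset.range (N + 1)).image τ, Finset.mem_image.mpr ⟨0, by simp, rfl⟩,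
    Finset.mem_image.mpr ⟨N, by simp, hτN⟩, ?_, ?_, fun x hx => ?_⟩
  · intro y hy
    obtain ⟨k, -, rfl⟩ := Finset.mem_image.mp hy
    exact hτ_mem k
  · calc ((Finset.range (N + 1)).image τ).card ≤ (N : ℝ) + 1 := by
          exact_mod_cast Finset.card_image_le.trans (Finset.card_range _).le
      _ ≤ (M / ε) ^ p + 2 := by
          have := Nat.floor_le (by positivity : 0 ≤ (M / ε) ^ p)
          push_cast [N]
          linarith
  set k := Nat.findGreatest (fun k => τ k ≤ x) N
  have hk : τ k ≤ x := Nat.findGreatest_spec (P := fun k => τ k ≤ x) (Nat.zero_le _) hx.1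
  have hkN : k < N := (Nat.findGreatest_le N).lt_of_ne fun h =>
    hx.2.not_ge (by rwa [← hτN, ← show k = N from h])
  have hxk : x < τ (k + 1) :=
    lt_of_not_ge (Nat.findGreatest_is_greatest (Nat.lt_succ_self k) hkN)
  refine ⟨τ k, Finset.mem_image_of_mem τ (Finset.mem_range.mpr (by omega)), hk, fun y hy => ?_⟩
  exact norm_sub_le_of_lt_nextStop hε.le (hτ_mem k).2 hy.1 (hτ_succ k ▸ hy.2.trans_lt hxk)

end Stopping

section Grids

/-- The largest point of `T` that is `≤ x`; a junk value if there is none. -/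
noncomputable def gridFloor (T : Finset ℝ) (x : ℝ) : ℝ :=
  sSup ((T : Set ℝ) ∩ Set.Iic x)

variable {T G : Finset ℝ} {s x : ℝ}

lemma gridFloor_mem_and_le (hs : s ∈ T) (hsx : s ≤ x) : gridFloor T x ∈ T ∧ gridFloor T x ≤ x :=
  Set.Nonempty.csSup_mem (s := (T : Set ℝ) ∩ Set.Iic x) ⟨s, hs, hsx⟩
    (T.finite_toSet.inter_of_left _)

lemma le_gridFloor (hs : s ∈ T) (hsx : s ≤ x) : s ≤ gridFloor T x :=
  le_csSup (T.finite_toSet.inter_of_left _).bddAbove ⟨hs, hsx⟩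

lemma gridFloor_gridFloor (hTG : T ⊆ G) (hs : s ∈ T) (hsx : s ≤ x) :
    gridFloor T (gridFloor G x) = gridFloor T x := by
  have hG := le_gridFloor (hTG hs) hsx
  have hT := gridFloor_mem_and_le hs hsx
  have hTG' := gridFloor_mem_and_le hs hG
  refine le_antisymm (le_gridFloor hTG'.1 (hTG'.2.trans (gridFloor_mem_and_le (hTG hs) hsx).2)) ?_
  exact le_gridFloor hT.1 (le_gridFloor (hTG hT.1) hT.2)

lemma norm_sub_gridFloor_le {E : Type*} [NormedAddCommGroup E] {u : ℝ → E} {ε : ℝ}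
    (hTG : T ⊆ G) (hs : s ∈ T) (hsx : s ≤ x) (hosc : ∀ y ∈ Set.Icc s x, ‖u y - u s‖ ≤ ε) :
    ‖u x - u (gridFloor G x)‖ ≤ 2 * ε := by
  have hy : gridFloor G x ∈ Set.Icc s x :=
    ⟨le_gridFloor (hTG hs) hsx, (gridFloor_mem_and_le (hTG hs) hsx).2⟩
  calc ‖u x - u (gridFloor G x)‖ ≤ ‖u x - u s‖ + ‖u (gridFloor G x) - u s‖ := by
        rw [norm_sub_rev (u (gridFloor G x))]
        exact norm_sub_le_norm_sub_add_norm_sub _ _ _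
    _ ≤ 2 * ε := by linarith [hosc x ⟨hsx, le_rfl⟩, hosc _ hy]

lemma exists_isPartition_comp_gridFloor_eq_stepFun {E : Type*} [AddCommMonoid E] {a b : ℝ}
    (ha : a ∈ T) (hb : b ∈ T) (hT : ↑T ⊆ Set.Icc a b) :
    ∃ (K : ℕ) (t : Fin (K + 1) → ℝ), IsPartition a b t ∧ StrictMono t ∧ K + 1 = T.card ∧
      ∀ (g : ℝ → E), ∀ x ∈ Set.Ico a b,
        g (gridFloor T x) = stepFun t (fun j => g (t j.castSucc)) x := by
  obtain ⟨K, hK⟩ : ∃ K, T.card = K + 1 :=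
    Nat.exists_eq_add_one.mpr (Finset.card_pos.mpr ⟨a, ha⟩)
  set t := T.orderEmbOfFin hK
  have ht : IsPartition a b t := by
    refine ⟨t.monotone, ?_, ?_⟩
    · refine (T.orderEmbOfFin_zero hK K.succ_pos).trans (le_antisymm ?_ (hT (T.min'_mem _)).1)
      exact T.min'_le a ha
    · refine (T.orderEmbOfFin_last hK K.succ_pos).trans (le_antisymm (hT (T.max'_mem _)).2 ?_)
      exact T.le_max' b hb
  refine ⟨K, t, ht, t.strictMono, hK.symm, fun g x hx => ?_⟩
  obtain ⟨j, h₁, h₂⟩ := ht.exists_cell hx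
  have hfloor : gridFloor T x = t j.castSucc := by
    have hmem := gridFloor_mem_and_le (T.orderEmbOfFin_mem hK j.castSucc) h₁
    obtain ⟨i, hi⟩ : gridFloor T x ∈ Set.range t := by
      rw [Finset.range_orderEmbOfFin]
      exact hmem.1
    refine le_antisymm ?_ (le_gridFloor (T.orderEmbOfFin_mem hK _) h₁)
    rw [← hi] at hmem ⊢
    exact t.monotone (Fin.le_castSucc_iff.mpr (t.lt_iff_lt.mp (hmem.2.trans_lt h₂)))
  rw [hfloor, stepFun_apply_of_mem_cell t.monotone h₁ h₂]

end Grids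

lemma two_rpow_div_div_two_lt_one {p q : ℝ} (hq : 0 < q) (hpq : p < q) :
    (2 : ℝ) ^ (p / q) / 2 < 1 := by
  rw [div_lt_one two_pos]
  simpa using Real.rpow_lt_rpow_of_exponent_lt one_lt_two ((div_lt_one hq).mpr hpq)

lemma geom_sum_le_two_mul_pow {X : ℝ} (hX : 2 ≤ X) (n : ℕ) :
    ∑ m ∈ Finset.range (n + 1), X ^ m ≤ 2 * X ^ n := by
  induction n with
  | zero => simp
  | succ n ih =>
    rw [Finset.sum_range_succ, pow_succ]
    nlinarith [pow_nonneg (zero_le_two.trans hX) n]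

section NestedGrids

variable {E : Type*} [NormedAddCommGroup E] {p a b M : ℝ} {u : ℝ → E}

/-- Superpose the stopping grids at the scales `ε = M / 2 ^ m`, `m ≤ n`. -/
lemma exists_nested_grids (hp : 1 ≤ p) (hM : 0 < M) (hab : a ≤ b)
    (hV : Vnorm p a b u ≤ ENNReal.ofReal M)
    (hrc : ∀ x ∈ Set.Ico a b, Filter.Tendsto u (nhdsWithin x (Set.Ici x)) (nhds (u x))) :
    ∃ G : ℕ → Finset ℝ, (∀ n, G n ⊆ G (n + 1)) ∧ (∀ n, a ∈ G n) ∧ (∀ n, b ∈ G n) ∧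
      (∀ n, ↑(G n) ⊆ Set.Icc a b) ∧ (∀ n, ((G n).card : ℝ) ≤ 6 * (2 ^ p) ^ n) ∧
      ∀ n, ∀ x ∈ Set.Ico a b, ‖u x - u (gridFloor (G n) x)‖ ≤ 2 * (M / 2 ^ n) := by
  choose T haT hbT hTab hTcard hosc using fun n : ℕ =>
    exists_finset_oscillation_le (u := u) (ε := M / 2 ^ n) (by linarith) hM.le hab hV hrc
      (by positivity)
  have hX : 2 ≤ (2 : ℝ) ^ p := by
    simpa using Real.rpow_le_rpow_of_exponent_le one_le_two hp
  have hTcard' (m : ℕ) : ((T m).card : ℝ) ≤ 3 * (2 ^ p) ^ m := by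
    have h := hTcard m
    rw [div_div_cancel₀ hM.ne', ← Real.rpow_pow_comm zero_le_two] at h
    linarith [one_le_pow₀ (n := m) (one_le_two.trans hX)]
  refine ⟨fun n => (Finset.range (n + 1)).biUnion T,
    fun n => Finset.biUnion_subset_biUnion_of_subset_left _
      (Finset.range_subset_range.mpr (n + 1).le_succ),
    fun n => Finset.mem_biUnion.mpr ⟨0, by simp, haT 0⟩,
    fun n => Finset.mem_biUnion.mpr ⟨0, by simp, hbT 0⟩,
    fun n => by simpa using fun m _ => hTab m, fun n => ?_, fun n x hx => ?_⟩
  · calc (((Finset.range (n + 1)).biUnion T).card : ℝ)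
        ≤ ∑ m ∈ Finset.range (n + 1), ((T m).card : ℝ) := by
          exact_mod_cast Finset.card_biUnion_le
      _ ≤ ∑ m ∈ Finset.range (n + 1), 3 * (2 ^ p) ^ m := Finset.sum_le_sum fun m _ => hTcard' m
      _ ≤ 6 * (2 ^ p) ^ n := by
          rw [← Finset.mul_sum]
          linarith [geom_sum_le_two_mul_pow hX n]
  · obtain ⟨s, hs, hsx, hosc⟩ := hosc n x hx
    exact norm_sub_gridFloor_le (Finset.subset_biUnion_of_mem T (Finset.self_mem_range_succ n))
      hs hsx hosc

end NestedGrids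

lemma rpow_sum_norm_rpow_le {E : Type*} [NormedAddCommGroup E] {q : ℝ} (hq : 0 < q) {K : ℕ}
    {φ : Fin K → E} {β : ℝ} (hβ : 0 ≤ β) (hφ : ∀ j, ‖φ j‖ ≤ β) :
    (∑ j, ‖φ j‖ ^ q) ^ (1 / q) ≤ (K : ℝ) ^ (1 / q) * β := by
  calc (∑ j, ‖φ j‖ ^ q) ^ (1 / q) ≤ ((K : ℝ) * β ^ q) ^ (1 / q) := by
        gcongr
        simpa using Finset.sum_le_card_nsmul Finset.univ _ _ fun j _ =>
            Real.rpow_le_rpow (norm_nonneg _) (hφ j) hq.le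
    _ = (K : ℝ) ^ (1 / q) * β := by
        rw [Real.mul_rpow (by positivity) (by positivity), ← Real.rpow_mul hβ,
          mul_one_div_cancel hq.ne', Real.rpow_one]

lemma hasSum_sub_of_tendsto {E : Type*} [NormedAddCommGroup E] {W : ℕ → E} {L : E}
    (hW : Filter.Tendsto W Filter.atTop (nhds L)) (hs : Summable fun n => ‖W (n + 1) - W n‖) :
    HasSum (fun n => W (n + 1) - W n) (L - W 0) := by
  refine (hasSum_iff_tendsto_nat_of_summable_norm hs).mpr ?_
  simpa only [Finset.sum_range_sub] using hW.sub_const (W 0)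

section VpInUq

variable {p q a b M : ℝ} {u : ℝ → H}

lemma Unorm_le_tsum {c : ℕ → ℂ} {A : ℕ → ℝ → H} (hc : Summable fun n => ‖c n‖)
    (hA : ∀ n, IsAtom q a b (A n)) (hu : ∀ x ∈ Set.Ico a b, HasSum (fun n => c n • A n x) (u x)) :
    Unorm q a b u ≤ ENNReal.ofReal (∑' n, ‖c n‖) :=
  iInf_le_of_le c <| iInf_le_of_le A <| iInf_le_of_le hc <| iInf_le_of_le hA <| iInf_le _ hu

lemma exists_isAtom_smul_eq_stepFun (hq : 0 < q) {K : ℕ} {t : Fin (K + 1) → ℝ}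
    (ht : IsPartition a b t) (φ : Fin K → H) :
    ∃ A : ℝ → H, IsAtom q a b A ∧
      ∀ x, (((∑ j, ‖φ j‖ ^ q) ^ (1 / q) : ℝ) : ℂ) • A x = stepFun t φ x := by
  set r := (∑ j, ‖φ j‖ ^ q) ^ (1 / q)
  have hr : 0 ≤ r := by positivity
  have hsum : ∑ j, ‖φ j‖ ^ q = r ^ q := by
    rw [← Real.rpow_mul (by positivity), one_div_mul_cancel hq.ne', Real.rpow_one]
  refine ⟨stepFun t ((r : ℂ)⁻¹ • φ), isAtom_iff.mpr ⟨K, t, _, ht, ?_, rfl⟩, fun x => ?_⟩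
  · calc ∑ j, ‖((r : ℂ)⁻¹ • φ) j‖ ^ q = (r⁻¹ * r) ^ q := by
          simp only [Pi.smul_apply, norm_smul, norm_inv, Complex.norm_real, Real.norm_of_nonneg hr,
            Real.mul_rpow (inv_nonneg.mpr hr) (norm_nonneg _), ← Finset.mul_sum, hsum,
            Real.mul_rpow (inv_nonneg.mpr hr) hr]
      _ ≤ 1 := Real.rpow_le_one (by positivity) (inv_mul_le_one_of_le₀ le_rfl hr) hq.le
  rw [smul_stepFun, smul_smul]
  rcases eq_or_ne r 0 with hr₀ | hr₀
  · have hφ (j : Fin K) : φ j = 0 := by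
      have hzero : ∑ j, ‖φ j‖ ^ q = 0 := by rw [hsum, hr₀, Real.zero_rpow hq.ne']
      have := (Finset.sum_eq_zero_iff_of_nonneg fun i _ =>
        Real.rpow_nonneg (norm_nonneg (φ i)) q).mp hzero j (Finset.mem_univ j)
      exact norm_eq_zero.mp ((Real.rpow_eq_zero (norm_nonneg _) hq.ne').mp this)
    simp [hr₀, hφ, stepFun]
  · rw [mul_inv_cancel₀ (by exact_mod_cast hr₀), one_smul]

/-- Each step function is a multiple of an atom, its coefficient being the `ℓ^q` norm of its
values. -/
lemma Unorm_le_tsum_of_hasSum_stepFun (hq : 0 < q) {K : ℕ → ℕ} {t : ∀ n, Fin (K n + 1) → ℝ}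
    (ht : ∀ n, IsPartition a b (t n)) {φ : ∀ n, Fin (K n) → H}
    (hφ : Summable fun n => (∑ j, ‖φ n j‖ ^ q) ^ (1 / q))
    (hu : ∀ x ∈ Set.Ico a b, HasSum (fun n => stepFun (t n) (φ n) x) (u x)) :
    Unorm q a b u ≤ ENNReal.ofReal (∑' n, (∑ j, ‖φ n j‖ ^ q) ^ (1 / q)) := by
  choose A hA hAφ using fun n => exists_isAtom_smul_eq_stepFun hq (ht n) (φ n)
  have hnorm (n : ℕ) :
      ‖(((∑ j, ‖φ n j‖ ^ q) ^ (1 / q) : ℝ) : ℂ)‖ = (∑ j, ‖φ n j‖ ^ q) ^ (1 / q) := by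
    rw [Complex.norm_real, Real.norm_of_nonneg (by positivity)]
  calc Unorm q a b u ≤ ENNReal.ofReal (∑' n, ‖(((∑ j, ‖φ n j‖ ^ q) ^ (1 / q) : ℝ) : ℂ)‖) :=
        Unorm_le_tsum (by simpa only [hnorm] using hφ) hA fun x hx => by
          simpa only [hAφ] using hu x hx
    _ = ENNReal.ofReal (∑' n, (∑ j, ‖φ n j‖ ^ q) ^ (1 / q)) := by simp only [hnorm]

/-- Shifted by one, so that the differences of consecutive approximations telescope from `0`. -/
noncomputable def gridApprox {E : Type*} [Zero E] (u : ℝ → E) (G : ℕ → Finset ℝ) : ℕ → ℝ → E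
  | 0 => 0
  | n + 1 => fun x => u (gridFloor (G n) x)

/-- The differences of consecutive grid approximations are step functions on the finer grid, with
values bounded by `β n`. -/
lemma Unorm_le_of_nested_grids (hq : 0 < q) (hab : a < b) {G : ℕ → Finset ℝ}
    (hG : ∀ n, G n ⊆ G (n + 1)) (ha : ∀ n, a ∈ G n) (hb : ∀ n, b ∈ G n)
    (hGab : ∀ n, ↑(G n) ⊆ Set.Icc a b) {β : ℕ → ℝ} (hβ₀ : ∀ x ∈ Set.Ico a b, ‖u x‖ ≤ β 0)
    (hβ : ∀ n, ∀ x ∈ Set.Ico a b, ‖u x - u (gridFloor (G n) x)‖ ≤ β (n + 1))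
    (hsum : Summable fun n => ((G n).card : ℝ) ^ (1 / q) * β n) :
    Unorm q a b u ≤ ENNReal.ofReal (∑' n, ((G n).card : ℝ) ^ (1 / q) * β n) := by
  choose K t ht htmono hK hstep using fun n =>
    exists_isPartition_comp_gridFloor_eq_stepFun (E := H) (ha n) (hb n) (hGab n)
  set φ : ∀ n, Fin (K n) → H :=
    fun n j => u (t n j.castSucc) - gridApprox u G n (t n j.castSucc)
  have hcell (n : ℕ) (j : Fin (K n)) : t n j.castSucc ∈ Set.Ico a b :=
    ⟨((ht n).mem_Icc _).1, ((htmono n) j.castSucc_lt_succ).trans_le ((ht n).mem_Icc _).2⟩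
  have hdev (n : ℕ) : ∀ x ∈ Set.Ico a b, ‖u x - gridApprox u G n x‖ ≤ β n := by
    cases n with
    | zero => simpa [gridApprox] using hβ₀
    | succ n => exact hβ n
  have hβ_nonneg (n : ℕ) : 0 ≤ β n := (norm_nonneg _).trans (hdev n a ⟨le_rfl, hab⟩)
  have hterm (n : ℕ) (x : ℝ) (hx : x ∈ Set.Ico a b) :
      stepFun (t n) (φ n) x = gridApprox u G (n + 1) x - gridApprox u G n x := by
    rw [← hstep n (fun y => u y - gridApprox u G n y) x hx]
    cases n with
    | zero => simp [gridApprox]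
    | succ n => simp [gridApprox, gridFloor_gridFloor (hG n) (ha n) hx.1]
  have hcoef (n : ℕ) : (∑ j, ‖φ n j‖ ^ q) ^ (1 / q) ≤ ((G n).card : ℝ) ^ (1 / q) * β n := by
    refine (rpow_sum_norm_rpow_le hq (hβ_nonneg n) fun j => hdev n _ (hcell n j)).trans ?_
    gcongr
    · exact hβ_nonneg n
    · exact_mod_cast (hK n ▸ (K n).le_succ : K n ≤ (G n).card)
  have hβ_summable : Summable β := hsum.of_nonneg_of_le hβ_nonneg fun n =>
    le_mul_of_one_le_left (hβ_nonneg n) (Real.one_le_rpow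
      (Nat.one_le_cast.mpr (Finset.card_pos.mpr ⟨a, ha n⟩)) (by positivity))
  have hcoef_summable := hsum.of_nonneg_of_le (fun _ => by positivity) hcoef
  refine (Unorm_le_tsum_of_hasSum_stepFun hq ht hcoef_summable fun x hx => ?_).trans
    (ENNReal.ofReal_le_ofReal (hcoef_summable.tsum_le_tsum hcoef hsum))
  have hlim : Filter.Tendsto (fun n => gridApprox u G n x) Filter.atTop (nhds (u x)) := by
    rw [tendsto_iff_norm_sub_tendsto_zero]
    refine squeeze_zero (fun _ => norm_nonneg _) (fun n => ?_) hβ_summable.tendsto_atTop_zero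
    rw [norm_sub_rev]
    exact hdev n x hx
  have hjump (n : ℕ) : ‖gridApprox u G (n + 1) x - gridApprox u G n x‖ ≤ β n := by
    obtain ⟨j, h₁, h₂⟩ := (ht n).exists_cell hx
    rw [← hterm n x hx, stepFun_apply_of_mem_cell (ht n).monotone h₁ h₂]
    exact hdev n _ (hcell n j)
  convert hasSum_sub_of_tendsto hlim
    (hβ_summable.of_nonneg_of_le (fun _ => norm_nonneg _) hjump) using 1
  · exact funext fun n => hterm n x hx
  · exact (sub_zero _).symm

lemma Unorm_le_of_Vnorm_le (hp : 1 ≤ p) (hpq : p < q) (hab : a < b) (hM : 0 < M)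
    (hV : Vnorm p a b u ≤ ENNReal.ofReal M)
    (hrc : ∀ x ∈ Set.Ico a b, Filter.Tendsto u (nhdsWithin x (Set.Ici x)) (nhds (u x)))
    (hua : u a = 0) :
    Unorm q a b u ≤ ENNReal.ofReal (24 / (1 - 2 ^ (p / q) / 2) * M) := by
  obtain ⟨G, hG, ha, hb, hGab, hcard, hdev⟩ := exists_nested_grids hp hM hab.le hV hrc
  have hq : 0 < q := by linarith
  set θ : ℝ := 2 ^ (p / q) / 2
  have hθ : θ < 1 := two_rpow_div_div_two_lt_one hq hpq
  have hcoef (n : ℕ) : ((G n).card : ℝ) ^ (1 / q) * (4 * (M / 2 ^ n)) ≤ 24 * M * θ ^ n := by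
    have h6 : (6 : ℝ) ^ (1 / q) ≤ 6 := Real.rpow_le_self_of_one_le (by norm_num)
      ((div_le_one hq).mpr (by linarith))
    calc ((G n).card : ℝ) ^ (1 / q) * (4 * (M / 2 ^ n))
        ≤ (6 * (2 ^ p) ^ n) ^ (1 / q) * (4 * (M / 2 ^ n)) := by gcongr; exact hcard n
      _ = 6 ^ (1 / q) * (4 * M) * θ ^ n := by
          rw [Real.mul_rpow (by norm_num) (by positivity), ← Real.rpow_pow_comm (by positivity),
            ← Real.rpow_mul zero_le_two, mul_one_div, div_pow]
          ring
      _ ≤ 6 * (4 * M) * θ ^ n := by gcongr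
      _ = 24 * M * θ ^ n := by ring
  have hgeom := (summable_geometric_of_lt_one (by positivity) hθ).mul_left (24 * M)
  have hsum := hgeom.of_nonneg_of_le (fun _ => by positivity) hcoef
  have hβ₀ (x : ℝ) (hx : x ∈ Set.Ico a b) : ‖u x‖ ≤ 4 * (M / 2 ^ 0) := by
    linarith [norm_le_of_Vnorm_le (by linarith) hM.le hV hua hx]
  have hβ (n : ℕ) (x : ℝ) (hx : x ∈ Set.Ico a b) :
      ‖u x - u (gridFloor (G n) x)‖ ≤ 4 * (M / 2 ^ (n + 1)) := by
    rw [pow_succ, ← div_div]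
    linarith [hdev n x hx]
  calc Unorm q a b u ≤ ENNReal.ofReal (∑' n, ((G n).card : ℝ) ^ (1 / q) * (4 * (M / 2 ^ n))) :=
        Unorm_le_of_nested_grids hq hab hG ha hb hGab hβ₀ hβ hsum
    _ ≤ ENNReal.ofReal (∑' n, 24 * M * θ ^ n) :=
        ENNReal.ofReal_le_ofReal (hsum.tsum_le_tsum hcoef hgeom)
    _ = ENNReal.ofReal (24 / (1 - θ) * M) := by
        rw [tsum_mul_left, tsum_geometric_of_lt_one (by positivity) hθ]
        ring_nf

/-- The limit `M ↓ ‖u‖_{V^p}` in `Unorm_le_of_Vnorm_le` also covers `‖u‖_{V^p} = 0`. -/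
lemma Unorm_le_mul_Vnorm (hp : 1 ≤ p) (hpq : p < q) (hab : a < b) (hV : Vnorm p a b u < ⊤)
    (hrc : ∀ x ∈ Set.Ico a b, Filter.Tendsto u (nhdsWithin x (Set.Ici x)) (nhds (u x)))
    (hua : u a = 0) :
    Unorm q a b u ≤ ENNReal.ofReal (24 / (1 - 2 ^ (p / q) / 2)) * Vnorm p a b u := by
  set C : ℝ := 24 / (1 - 2 ^ (p / q) / 2)
  set V := (Vnorm p a b u).toReal
  have hlim : Filter.Tendsto (fun M => ENNReal.ofReal (C * M)) (nhdsWithin V (Set.Ioi V))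
      (nhds (ENNReal.ofReal (C * V))) :=
    ((ENNReal.continuous_ofReal.comp (continuous_const.mul continuous_id)).tendsto V).mono_left
      nhdsWithin_le_nhds
  calc Unorm q a b u ≤ ENNReal.ofReal (C * V) := by
        refine ge_of_tendsto hlim (eventually_nhdsWithin_of_forall fun M hM => ?_)
        refine Unorm_le_of_Vnorm_le hp hpq hab (ENNReal.toReal_nonneg.trans_lt hM) ?_ hrc hua
        exact (ENNReal.ofReal_toReal hV.ne).symm.trans_le (ENNReal.ofReal_le_ofReal (le_of_lt hM))
    _ ≤ ENNReal.ofReal C * Vnorm p a b u := by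
        rw [ENNReal.ofReal_mul' ENNReal.toReal_nonneg, ENNReal.ofReal_toReal hV.ne]

end VpInUq

theorem Up_Vp_comparison_general
    {H : Type*} [NormedAddCommGroup H] [InnerProductSpace ℂ H]
    (p q a b : ℝ) (hp : 1 ≤ p) (hpq : p < q) (hab : a < b) :
    -- (a) `‖u‖_{V^p} ≤ C(p) ‖u‖_{U^p}` when `lim_{t ↑ b} u(t) = 0`
    (∃ C : ℝ, 0 ≤ C ∧ ∀ u : ℝ → H, Unorm p a b u < ⊤ →
      Filter.Tendsto u (nhdsWithin b (Set.Iio b)) (nhds 0) →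
      Vnorm p a b u ≤ ENNReal.ofReal C * Unorm p a b u) ∧
    -- (b) `‖u‖_{U^q} ≤ C(p,q) ‖u‖_{V^p}` for `u` right-continuous with `u(a) = 0`
    (∃ C : ℝ, 0 ≤ C ∧ ∀ u : ℝ → H, Vnorm p a b u < ⊤ →
      (∀ t ∈ Set.Ico a b, Filter.Tendsto u (nhdsWithin t (Set.Ici t)) (nhds (u t))) →
      u a = 0 →
      Unorm q a b u ≤ ENNReal.ofReal C * Vnorm p a b u) := by
  have hθ := two_rpow_div_div_two_lt_one (by linarith) hpq
  exact ⟨⟨2, zero_le_two, fun u _ _ => Vnorm_le_two_mul_Unorm hp u⟩,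
    ⟨_, div_nonneg (by norm_num) (by linarith), fun u hV hrc hua =>
      Unorm_le_mul_Vnorm hp hpq hab hV hrc hua⟩⟩

/-- **Comparison between `U^p` and `V^p` spaces**: (a) `U^p ⊂ V^p` for functions
vanishing at the right endpoint; (b) right-continuous `V^p` functions vanishing
at the left endpoint belong to `U^q` for every `q > p`. -/
theorem Up_Vp_comparison
    {H : Type*} [NormedAddCommGroup H] [InnerProductSpace ℂ H] [CompleteSpace H]
    (p q a b : ℝ) (hp : 1 ≤ p) (hpq : p < q) (hab : a < b) :
    -- (a) `‖u‖_{V^p} ≤ C(p) ‖u‖_{U^p}` when `lim_{t ↑ b} u(t) = 0`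
    (∃ C : ℝ, 0 ≤ C ∧ ∀ u : ℝ → H, Unorm p a b u < ⊤ →
      Filter.Tendsto u (nhdsWithin b (Set.Iio b)) (nhds 0) →
      Vnorm p a b u ≤ ENNReal.ofReal C * Unorm p a b u) ∧
    -- (b) `‖u‖_{U^q} ≤ C(p,q) ‖u‖_{V^p}` for `u` right-continuous with `u(a) = 0`
    (∃ C : ℝ, 0 ≤ C ∧ ∀ u : ℝ → H, Vnorm p a b u < ⊤ →
      (∀ t ∈ Set.Ico a b, Filter.Tendsto u (nhdsWithin t (Set.Ici t)) (nhds (u t))) →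
      u a = 0 →
      Unorm q a b u ≤ ENNReal.ofReal C * Vnorm p a b u) :=
  Up_Vp_comparison_general p q a b hp hpq hab

end UVSpaces
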